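/- Let F be a filter on ℕ containing only infinite sets that meets, for every coloring c : [ℕ]² → 2, the set D_c = {a ⊆ ℕ : a infinite and a is homogeneous for c}, and that for every A ⊆ ℕ contains an element a with a ⊆ A or a ⊆ ℕ\A. Then the upward closure of F under ⊆ is a Ramsey ultrafilter on ℕ. -/
import Mathlib


/-- `a ⊆* b` : almost inclusion, i.e. `a \ b` is finite. -/
def AlmostSubset (a b : Set ℕ) : Prop := (a \ b).Finite

/-- `H` is homogeneous for the 2-coloring `c` of pairs. -/
def HomogFor (c : Sym2 ℕ → Fin 2) (H : Set ℕ) : Prop :=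
  ∃ i : Fin 2, ∀ m ∈ H, ∀ n ∈ H, m ≠ n → c s(m, n) = i

/-- `F` is a filter with respect to `⊆*` consisting of infinite subsets of `ℕ`. -/
def IsAlmostFilter (F : Set (Set ℕ)) : Prop :=
  F.Nonempty ∧ (∀ a ∈ F, a.Infinite) ∧
  (∀ a ∈ F, ∀ b : Set ℕ, b.Infinite → AlmostSubset a b → b ∈ F) ∧
  (∀ a ∈ F, ∀ b ∈ F, ∃ c ∈ F, AlmostSubset c a ∧ AlmostSubset c b)

lemma meet_lemma (F : Set (Set ℕ)) (hF : IsAlmostFilter F) :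
    ∀ a ∈ F, ∀ b ∈ F, ∃ d ∈ F, d ⊆ a ∩ b := by
  obtain ⟨-, hinf, hup, hmeet⟩ := hF
  intro a ha b hb
  obtain ⟨c, hc, hca, hcb⟩ := hmeet a ha b hb
  refine ⟨c ∩ (a ∩ b), ?_, Set.inter_subset_right⟩
  have hdiff : c \ (c ∩ (a ∩ b)) = (c \ a) ∪ (c \ b) := by
    ext x; simp [and_or_left]; tauto
  have hfin : (c \ (c ∩ (a ∩ b))).Finite := by
    rw [hdiff]; exact hca.union hcb
  have hinf' : (c ∩ (a ∩ b)).Infinite := by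
    have := (hinf c hc).diff hfin
    refine this.mono fun x hx => ?_
    simp only [Set.mem_diff, Set.mem_inter_iff, not_and] at hx ⊢
    tauto
  exact hup c hc _ hinf' hfin

/-- If a `⊆*`-filter `F` of infinite subsets of `ℕ` meets, for every coloring `c`, the
set of infinite `c`-homogeneous sets, and for every `A ⊆ ℕ` contains a set inside `A`
or inside its complement, then the `⊆`-upward closure of `F` is a Ramsey ultrafilter. -/
theorem generic_filter_gives_ramsey_ultrafilter (F : Set (Set ℕ))
    (hF : IsAlmostFilter F)
    (hhom : ∀ c : Sym2 ℕ → Fin 2, ∃ a ∈ F, a.Infinite ∧ HomogFor c a)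
    (hdec : ∀ A : Set ℕ, ∃ a ∈ F, a ⊆ A ∨ a ⊆ Aᶜ) :
    ∃ U : Ultrafilter ℕ, {B : Set ℕ | B ∈ U} = {B : Set ℕ | ∃ a ∈ F, a ⊆ B} ∧
      ∀ c : Sym2 ℕ → Fin 2, ∃ H ∈ U, HomogFor c H := by
  obtain ⟨hne, hinf, hup, hmeet⟩ := hF
  let G : Filter ℕ :=
    { sets := {B : Set ℕ | ∃ a ∈ F, a ⊆ B}
      univ_sets := by
        obtain ⟨a, ha⟩ := hne
        exact ⟨a, ha, Set.subset_univ a⟩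
      sets_of_superset := by
        rintro B C ⟨a, ha, hab⟩ hBC
        exact ⟨a, ha, hab.trans hBC⟩
      inter_sets := by
        rintro B C ⟨a, ha, haB⟩ ⟨b, hb, hbC⟩
        obtain ⟨d, hd, hdab⟩ := meet_lemma F ⟨hne, hinf, hup, hmeet⟩ a ha b hb
        exact ⟨d, hd, hdab.trans (Set.inter_subset_inter haB hbC)⟩ }
  have hmemG : ∀ B : Set ℕ, B ∈ G ↔ ∃ a ∈ F, a ⊆ B := fun B => Iff.rfl
  have hcompl : ∀ s : Set ℕ, sᶜ ∉ G ↔ s ∈ G := by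
    intro s
    constructor
    · intro h
      obtain ⟨a, ha, hor⟩ := hdec s
      rcases hor with h1 | h1
      · exact ⟨a, ha, h1⟩
      · exact absurd ⟨a, ha, h1⟩ h
    · rintro ⟨a, ha, has⟩ ⟨b, hb, hbs⟩
      obtain ⟨d, hd, hdab⟩ := meet_lemma F ⟨hne, hinf, hup, hmeet⟩ a ha b hb
      have : d = ∅ := by
        apply Set.eq_empty_iff_forall_notMem.mpr
        intro x hx
        exact hbs (hdab hx).2 (has (hdab hx).1)
      exact (hinf d hd) (this ▸ Set.finite_empty)
  refine ⟨Ultrafilter.ofComplNotMemIff G hcompl, rfl, ?_⟩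
  intro c
  obtain ⟨a, ha, _, hhom'⟩ := hhom c
  exact ⟨a, ⟨a, ha, subset_rfl⟩, hhom'⟩
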